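/- arXiv:1004.2030 — 5 statements merged into one kernel-verified Lean document; each statement's English description precedes it below -/
import Mathlib

section
/- The real number 1/64 − (1/8)·Σ_{k=1}^∞ 2^{−(k²+4k+6)} is irrational. -/
/-!
For `f` strictly increasing, `b ^ f n * ∑ b^(-f k)` is an integer plus `b ^ f n` times the tail
after `n`, which lies in `(0, 2 b^(-(f (n+1) - f n))]`. If the gaps `f (n+1) - f n` are unbounded,
the sum therefore has integer multiples arbitrarily close to, yet different from, integers; for a
rational `p / q` these distances are positive multiples of `1 / q`. Here `f k = (k+1)² + 4(k+1) + 6`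
has gaps `2k + 7`.
-/

open Finset

theorem irrational_of_forall_exists_intCast_mul_sub_pos_lt {x : ℝ}
    (h : ∀ ε > 0, ∃ m a : ℤ, 0 < m * x - a ∧ m * x - a < ε) : Irrational x := by
  rintro ⟨q, rfl⟩
  have hden : (0 : ℝ) < q.den := by exact_mod_cast q.pos
  obtain ⟨m, a, hpos, hlt⟩ := h (1 / q.den) (by positivity)
  have hcast : ((m * q.num - a * q.den : ℤ) : ℝ) = q.den * (m * q - a) := by
    rw [Rat.cast_def]; push_cast; field_simp
  have hz_pos : (0 : ℝ) < (m * q.num - a * q.den : ℤ) := by rw [hcast]; positivity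
  have hz_lt : ((m * q.num - a * q.den : ℤ) : ℝ) < 1 := by
    rw [hcast, ← lt_div_iff₀' hden]; simpa using hlt
  norm_cast at hz_pos hz_lt
  omega

section LacunarySeries

variable {b : ℕ} {f : ℕ → ℕ}

theorem summable_one_div_pow_of_strictMono (hb : 1 < b) (hf : StrictMono f) :
    Summable fun k ↦ (1 : ℝ) / (b : ℝ) ^ f k := by
  have hb' : (1 : ℝ) < b := by exact_mod_cast hb
  have hr : 1 / (b : ℝ) < 1 := (div_lt_one (by linarith)).2 hb'
  refine .of_nonneg_of_le (fun k ↦ by positivity) (fun k ↦ ?_)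
    (summable_geometric_of_lt_one (by positivity) hr)
  rw [div_pow, one_pow]
  exact one_div_le_one_div_of_le (by positivity) (pow_le_pow_right₀ hb'.le (hf.id_le k))

theorem tsum_one_div_pow_add_le_of_strictMono (hb : 1 < b) (hf : StrictMono f) (n : ℕ) :
    ∑' i, (1 : ℝ) / (b : ℝ) ^ f (i + n) ≤ 2 / (b : ℝ) ^ f n := by
  have hb' : (2 : ℝ) ≤ b := by exact_mod_cast hb
  have hr : (1 : ℝ) / b < 1 := (div_lt_one (by linarith)).2 (by linarith)
  have hterm : ∀ i, (1 : ℝ) / (b : ℝ) ^ f (i + n) ≤ 1 / (b : ℝ) ^ f n * (1 / b) ^ i := by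
    intro i
    rw [div_pow, one_pow, div_mul_div_comm, one_mul, ← pow_add]
    refine one_div_le_one_div_of_le (by positivity) (pow_le_pow_right₀ (by linarith) ?_)
    linarith [hf.add_le_nat i n]
  calc ∑' i, (1 : ℝ) / (b : ℝ) ^ f (i + n)
      ≤ ∑' i, 1 / (b : ℝ) ^ f n * (1 / (b : ℝ)) ^ i :=
        ((summable_one_div_pow_of_strictMono hb hf).comp_injective (add_left_injective n)).tsum_le_tsum
          hterm ((summable_geometric_of_lt_one (by positivity) hr).mul_left _)
    _ = (1 - 1 / (b : ℝ))⁻¹ / (b : ℝ) ^ f n := by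
        rw [tsum_mul_left, tsum_geometric_of_lt_one (by positivity) hr, one_div_mul_eq_div]
    _ ≤ 2 / (b : ℝ) ^ f n := by
        have : 1 / (b : ℝ) ≤ 1 / 2 := one_div_le_one_div_of_le (by norm_num) hb'
        gcongr
        rw [inv_le_comm₀ (by linarith) (by norm_num)]
        linarith

theorem pow_mul_sum_range_one_div_pow_of_monotone (hb : b ≠ 0) (hf : Monotone f) (n : ℕ) :
    (b : ℝ) ^ f n * ∑ k ∈ range (n + 1), 1 / (b : ℝ) ^ f k =
      ((∑ k ∈ range (n + 1), b ^ (f n - f k) : ℕ) : ℝ) := by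
  rw [mul_sum]
  push_cast
  refine sum_congr rfl fun k hk ↦ ?_
  have hk : f k ≤ f n := hf (Nat.lt_succ_iff.mp (mem_range.mp hk))
  rw [pow_sub₀ _ (by exact_mod_cast hb) hk, div_eq_mul_inv, one_mul]

theorem irrational_tsum_one_div_pow_of_strictMono (hb : 1 < b) (hf : StrictMono f)
    (hgap : ∀ N, ∃ n, N ≤ f (n + 1) - f n) : Irrational (∑' k, (1 : ℝ) / (b : ℝ) ^ f k) := by
  have hb' : (1 : ℝ) < b := by exact_mod_cast hb
  have hr : 1 / (b : ℝ) < 1 := (div_lt_one (by linarith)).2 hb'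
  refine irrational_of_forall_exists_intCast_mul_sub_pos_lt fun ε hε ↦ ?_
  obtain ⟨N, hN⟩ := exists_pow_lt_of_lt_one (half_pos hε) hr
  obtain ⟨n, hn⟩ := hgap N
  have hsplit := (summable_one_div_pow_of_strictMono hb hf).sum_add_tsum_nat_add (n + 1)
  set tail := ∑' i, (1 : ℝ) / (b : ℝ) ^ f (i + (n + 1))
  refine ⟨(b ^ f n : ℕ), (∑ k ∈ range (n + 1), b ^ (f n - f k) : ℕ), ?_⟩
  have hfrac : ((b ^ f n : ℕ) : ℤ) * ∑' k, (1 : ℝ) / (b : ℝ) ^ f k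
      - ((∑ k ∈ range (n + 1), b ^ (f n - f k) : ℕ) : ℤ) = (b : ℝ) ^ f n * tail := by
    rw [← hsplit]
    push_cast
    rw [mul_add, pow_mul_sum_range_one_div_pow_of_monotone (by omega) hf.monotone]
    push_cast
    ring
  rw [hfrac]
  have htail_pos : 0 < tail := ((summable_one_div_pow_of_strictMono hb hf).comp_injective
    (add_left_injective (n + 1))).tsum_pos (fun i ↦ (one_div_pos.2 (pow_pos (by linarith) _)).le) 0
    (one_div_pos.2 (pow_pos (by linarith) _))
  refine ⟨by positivity, ?_⟩
  calc (b : ℝ) ^ f n * tail ≤ (b : ℝ) ^ f n * (2 / (b : ℝ) ^ f (n + 1)) :=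
        mul_le_mul_of_nonneg_left (tsum_one_div_pow_add_le_of_strictMono hb hf _) (by positivity)
    _ = 2 * (1 / (b : ℝ)) ^ (f (n + 1) - f n) := by
        rw [one_div_pow, pow_sub₀ _ (by positivity) (hf.monotone n.le_succ)]
        field_simp
    _ ≤ 2 * (1 / (b : ℝ)) ^ N := by
        gcongr 2 * ?_
        exact pow_le_pow_of_le_one (by positivity) hr.le hn
    _ < ε := by linarith

end LacunarySeries

/-- the number 1/64 − (1/8)·Σ_{k=1}^∞ 2^{−(k²+4k+6)} is irrational. -/
theorem irrational_betti_number :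
    Irrational (1 / 64 - (1 / 8) * ∑' k : ℕ, (1 : ℝ) / 2 ^ ((k + 1) ^ 2 + 4 * (k + 1) + 6)) := by
  have hS : Irrational (∑' k : ℕ, (1 : ℝ) / 2 ^ ((k + 1) ^ 2 + 4 * (k + 1) + 6)) := by
    have hf : StrictMono fun k : ℕ ↦ (k + 1) ^ 2 + 4 * (k + 1) + 6 :=
      strictMono_nat_of_lt_succ fun k ↦ by nlinarith
    exact_mod_cast irrational_tsum_one_div_pow_of_strictMono one_lt_two hf
      fun N ↦ ⟨N, by ring_nf; omega⟩
  convert (hS.ratCast_mul (q := 1 / 8) (by norm_num)).ratCast_sub (q := 1 / 64) using 2 <;> norm_num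
end

section
/- Let Γ be a countable group acting measurably by measure-preserving transformations on a standard probability space (X, μ), let A, B ⊆ X be measurable sets, and let f : X → [0, ∞] be a measurable function that is constant on Γ-orbits. Then ∫_A f(x)·#{γ ∈ Γ : γ·x ∈ B} dμ(x) = ∫_B f(x)·#{γ ∈ Γ : γ·x ∈ A} dμ(x), where the cardinalities are taken in ℕ ∪ {∞} and the integrals are Lebesgue integrals with values in [0, ∞]. -/
open MeasureTheory

/-! Writing the count `#{γ : γ • x ∈ B}` as a sum over `Γ` turns the left side into
`∑ γ, ∫_{A ∩ γ⁻¹B} f`. Translation by `γ` carries `A ∩ γ⁻¹B` onto `B ∩ γA` preserving both `μ`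
and `f`, so the two sides agree term by term after reindexing by `γ ↦ γ⁻¹`. -/

lemma ENNReal.mul_encard_eq_tsum_indicator {α : Type*} (s : Set α) (c : ENNReal) :
    c * (s.encard : ENNReal) = ∑' a, s.indicator (fun _ => c) a := by
  rw [← tsum_subtype, ENNReal.tsum_set_const, mul_comm]

section Action

variable {Γ X : Type*} [MeasurableSpace X] {μ : Measure X} {f : X → ENNReal}

theorem setLIntegral_mul_encard_smul_mem_eq_tsum [SMul Γ X] [Countable Γ]
    (hsmul : ∀ γ : Γ, Measurable (fun x : X => γ • x)) (hf : Measurable f)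
    (A : Set X) {B : Set X} (hB : MeasurableSet B) :
    ∫⁻ x in A, f x * ({γ : Γ | γ • x ∈ B}.encard : ENNReal) ∂μ
      = ∑' γ : Γ, ∫⁻ x in A ∩ (γ • ·) ⁻¹' B, f x ∂μ := by
  have hpre : ∀ γ : Γ, MeasurableSet ((γ • ·) ⁻¹' B) := fun γ => hsmul γ hB
  have hexpand : ∀ x, f x * ({γ : Γ | γ • x ∈ B}.encard : ENNReal)
      = ∑' γ : Γ, ((γ • ·) ⁻¹' B).indicator f x := fun x => by
    rw [ENNReal.mul_encard_eq_tsum_indicator]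
    rfl
  simp_rw [hexpand]
  rw [lintegral_tsum fun γ => (hf.indicator (hpre γ)).aemeasurable]
  refine tsum_congr fun γ => ?_
  rw [lintegral_indicator (hpre γ), Measure.restrict_restrict (hpre γ), Set.inter_comm]

theorem setLIntegral_inter_preimage_smul_eq [Group Γ] [MulAction Γ X]
    (hpres : ∀ γ : Γ, MeasurePreserving (fun x : X => γ • x) μ μ) (hf : Measurable f)
    (horb : ∀ (γ : Γ) (x : X), f (γ • x) = f x)
    {A B : Set X} (hA : MeasurableSet A) (hB : MeasurableSet B) (γ : Γ) :
    ∫⁻ x in A ∩ (γ • ·) ⁻¹' B, f x ∂μ = ∫⁻ x in B ∩ (γ⁻¹ • ·) ⁻¹' A, f x ∂μ := by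
  have htarget : MeasurableSet (B ∩ (γ⁻¹ • ·) ⁻¹' A) :=
    hB.inter ((hpres γ⁻¹).measurable hA)
  have hsource : (γ • ·) ⁻¹' (B ∩ (γ⁻¹ • ·) ⁻¹' A) = A ∩ (γ • ·) ⁻¹' B := by
    ext x
    simp only [Set.mem_preimage, Set.mem_inter_iff, inv_smul_smul, and_comm]
  rw [← (hpres γ).setLIntegral_comp_preimage htarget hf, hsource]
  simp only [horb]

end Action

theorem mass_transport_general {Γ X : Type*} [Group Γ] [Countable Γ] [MeasurableSpace X]
    (μ : Measure X) [MulAction Γ X]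
    (hpres : ∀ γ : Γ, MeasurePreserving (fun x : X => γ • x) μ μ)
    (A B : Set X) (hA : MeasurableSet A) (hB : MeasurableSet B)
    (f : X → ENNReal) (hf : Measurable f)
    (horb : ∀ (γ : Γ) (x : X), f (γ • x) = f x) :
    ∫⁻ x in A, f x * ({γ : Γ | γ • x ∈ B}.encard : ENNReal) ∂μ
      = ∫⁻ x in B, f x * ({γ : Γ | γ • x ∈ A}.encard : ENNReal) ∂μ := by
  have hsmul : ∀ γ : Γ, Measurable (fun x : X => γ • x) := fun γ => (hpres γ).measurable
  rw [setLIntegral_mul_encard_smul_mem_eq_tsum hsmul hf A hB,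
    setLIntegral_mul_encard_smul_mem_eq_tsum hsmul hf B hA]
  conv_rhs => rw [← (Equiv.inv Γ).tsum_eq]
  exact tsum_congr (setLIntegral_inter_preimage_smul_eq hpres hf horb hA hB)

/-- mass-transport principle for a measure-preserving action of a
countable group: ∫_A f·#{γ : γ·x ∈ B} dμ = ∫_B f·#{γ : γ·x ∈ A} dμ for f
measurable, non-negative-extended-real-valued and constant on orbits. -/
theorem mass_transport {Γ X : Type*} [Group Γ] [Countable Γ] [MeasurableSpace X]
    (μ : Measure X) [IsProbabilityMeasure μ] [MulAction Γ X]
    (hpres : ∀ γ : Γ, MeasurePreserving (fun x : X => γ • x) μ μ)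
    (A B : Set X) (hA : MeasurableSet A) (hB : MeasurableSet B)
    (f : X → ENNReal) (hf : Measurable f)
    (horb : ∀ (γ : Γ) (x : X), f (γ • x) = f x) :
    ∫⁻ x in A, f x * ({γ : Γ | γ • x ∈ B}.encard : ENNReal) ∂μ
      = ∫⁻ x in B, f x * ({γ : Γ | γ • x ∈ A}.encard : ENNReal) ∂μ :=
  mass_transport_general μ hpres A B hA hB f hf horb
end

section
/- If a Turing dynamical system (X, T_X) has disjoint accepting chains, then its first and second fundamental values are equal: Ω_1(T_X) = Ω_2(T_X). -/
open MeasureTheory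

noncomputable section

attribute [local instance] Classical.propDecidable

/-- A Turing dynamical system: a measure-preserving right action ρ of Γ on a
probability space (X, μ), a finite measurable partition of X into pieces, disjoint
distinguished sets I, A, R each a union of pieces, and a group element for each piece,
neutral on pieces contained in A ∪ R. -/
structure TuringSystem (X : Type*) [MeasurableSpace X] (μ : Measure X)
    (Γ : Type*) [Group Γ] where
  /-- the right action: `ρ γ x` is x·γ -/
  ρ : Γ → X ≃ᵐ X
  ρ_one : ρ 1 = MeasurableEquiv.refl X
  /-- right action: x·(γδ) = (x·γ)·δ -/
  ρ_mul : ∀ γ δ : Γ, ρ (γ * δ) = (ρ γ).trans (ρ δ)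
  ρ_pres : ∀ γ : Γ, MeasurePreserving (ρ γ) μ μ
  n : ℕ
  piece : Fin n → Set X
  piece_meas : ∀ i, MeasurableSet (piece i)
  piece_disj : ∀ i j, i ≠ j → Disjoint (piece i) (piece j)
  piece_cover : ⋃ i, piece i = Set.univ
  I : Set X
  A : Set X
  R : Set X
  I_pieces : ∃ s : Finset (Fin n), I = ⋃ i ∈ s, piece i
  A_pieces : ∃ s : Finset (Fin n), A = ⋃ i ∈ s, piece i
  R_pieces : ∃ s : Finset (Fin n), R = ⋃ i ∈ s, piece i
  disj_IA : Disjoint I A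
  disj_IR : Disjoint I R
  disj_AR : Disjoint A R
  elt : Fin n → Γ
  elt_one : ∀ i, piece i ⊆ A ∪ R → elt i = 1

namespace TuringSystem

variable {X : Type*} [MeasurableSpace X] {μ : Measure X} {Γ : Type*} [Group Γ]
variable (S : TuringSystem X μ Γ)

lemma exists_piece (x : X) : ∃ i, x ∈ S.piece i := by
  have hx : x ∈ ⋃ i, S.piece i := S.piece_cover.symm ▸ Set.mem_univ x
  exact Set.mem_iUnion.mp hx

/-- the Turing map T_X -/
def map (x : X) : X := S.ρ (S.elt (S.exists_piece x).choose) x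

/-- T_X^∞(x) is defined, i.e. the trajectory of x reaches a fixed point -/
def Halts (x : X) : Prop := ∃ k : ℕ, S.map (S.map^[k] x) = S.map^[k] x

/-- T_X^∞(x) (defined as x itself when the trajectory never stabilizes) -/
def limitPt (x : X) : X := if h : S.Halts x then S.map^[h.choose] x else x

/-- the first fundamental set 𝓕₁ -/
def F1 : Set X :=
  {x ∈ S.I | S.Halts x ∧ S.limitPt x ∈ S.A ∧ ∀ y : X, S.map y ≠ x}

/-- the second fundamental set 𝓕₂ = T_X^∞(𝓕₁) -/
def F2 : Set X := S.limitPt '' S.F1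

/-- the first fundamental value Ω₁ -/
def Omega1 : ENNReal := μ S.F1

/-- the second fundamental value Ω₂ -/
def Omega2 : ENNReal := μ S.F2

/-- the system stops on any configuration -/
def StopsAlways : Prop := ∀ᵐ x ∂μ, S.Halts x ∧ S.limitPt x ∈ S.A ∪ S.R

/-- the system does not restart -/
def DoesNotRestart : Prop := μ (Set.range S.map ∩ S.I) = 0

/-- the system has disjoint accepting chains -/
def DisjointAcceptingChains : Prop :=
  ∃ Z : Set X, μ Z = 0 ∧ Set.InjOn S.limitPt (S.F1 \ Z)

end TuringSystem

/-! Split 𝓕₁ by the first time k at which an orbit enters A and by the itinerary (the pieces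
visited) up to that time. These blocks are countably many, measurable and pairwise disjoint, and
on each of them T_X^∞ = T_X^k is the single measure-preserving map ρ(γ_{i₀} ⋯ γ_{i_{k-1}}).
Hence T_X^∞ cannot increase the measure of a subset of 𝓕₁, and preserves it where it is
injective, which by hypothesis is all of 𝓕₁ up to a null set. -/

open Set Function

lemma Function.iterate_eq_of_isFixedPt {α : Type*} {f : α → α} {x : α} {k m : ℕ}
    (hk : IsFixedPt f (f^[k] x)) (hm : IsFixedPt f (f^[m] x)) : f^[k] x = f^[m] x := by
  have key : ∀ {k m : ℕ}, k ≤ m → IsFixedPt f (f^[k] x) → f^[m] x = f^[k] x :=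
    fun hkm h => by rw [← Nat.sub_add_cancel hkm, iterate_add_apply, (h.iterate _).eq]
  rcases le_total k m with h | h
  · exact (key h hk).symm
  · exact key h hm

namespace MeasureTheory

variable {X Y ι : Type*} [MeasurableSpace X] [MeasurableSpace Y] {μ : Measure X}
  {ν : Measure Y}

lemma MeasurePreserving.measure_image_of_eqOn {e : X ≃ᵐ Y} (he : MeasurePreserving e μ ν)
    {f : X → Y} {s : Set X} (hf : EqOn f e s) : ν (f '' s) = μ s := by
  rw [hf.image_eq, e.image_eq_preimage_symm, he.symm.measure_preimage_equiv]

section Piecewise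

variable [Countable ι] {f : X → Y} {e : ι → X ≃ᵐ Y} {B : ι → Set X} {s : Set X}

lemma tsum_measure_image_inter_eq (he : ∀ i, MeasurePreserving (e i) μ ν)
    (hB : ∀ i, MeasurableSet (B i)) (hBd : Pairwise (Disjoint on B))
    (hf : ∀ i, EqOn f (e i) (B i)) (hs : MeasurableSet s) (hsB : s ⊆ ⋃ i, B i) :
    ∑' i, ν (f '' (s ∩ B i)) = μ s := by
  calc ∑' i, ν (f '' (s ∩ B i)) = ∑' i, μ (s ∩ B i) :=
        tsum_congr fun i => (he i).measure_image_of_eqOn ((hf i).mono inter_subset_right)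
    _ = μ (⋃ i, s ∩ B i) :=
        (measure_iUnion (fun i j hij => (hBd hij).mono inter_subset_right inter_subset_right)
          fun i => hs.inter (hB i)).symm
    _ = μ s := by rw [← inter_iUnion, inter_eq_left.2 hsB]

lemma measure_image_le_of_eqOn_piecewise (he : ∀ i, MeasurePreserving (e i) μ ν)
    (hB : ∀ i, MeasurableSet (B i)) (hBd : Pairwise (Disjoint on B))
    (hf : ∀ i, EqOn f (e i) (B i)) (hs : MeasurableSet s) (hsB : s ⊆ ⋃ i, B i) :
    ν (f '' s) ≤ μ s :=
  calc ν (f '' s) = ν (⋃ i, f '' (s ∩ B i)) := by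
        rw [← image_iUnion, ← inter_iUnion, inter_eq_left.2 hsB]
    _ ≤ ∑' i, ν (f '' (s ∩ B i)) := measure_iUnion_le _
    _ = μ s := tsum_measure_image_inter_eq he hB hBd hf hs hsB

lemma measure_image_eq_of_eqOn_piecewise (he : ∀ i, MeasurePreserving (e i) μ ν)
    (hB : ∀ i, MeasurableSet (B i)) (hBd : Pairwise (Disjoint on B))
    (hf : ∀ i, EqOn f (e i) (B i)) (hs : MeasurableSet s) (hsB : s ⊆ ⋃ i, B i)
    (hinj : InjOn f s) : ν (f '' s) = μ s :=
  calc ν (f '' s) = ν (⋃ i, f '' (s ∩ B i)) := by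
        rw [← image_iUnion, ← inter_iUnion, inter_eq_left.2 hsB]
    _ = ∑' i, ν (f '' (s ∩ B i)) := by
        refine measure_iUnion (fun i j hij => ((hBd hij).mono inter_subset_right
          inter_subset_right).image hinj inter_subset_left inter_subset_left) fun i => ?_
        rw [((hf i).mono inter_subset_right).image_eq]
        exact (e i).measurableSet_image.2 (hs.inter (hB i))
    _ = μ s := tsum_measure_image_inter_eq he hB hBd hf hs hsB

end Piecewise

end MeasureTheory

namespace TuringSystem

variable {X : Type*} [MeasurableSpace X] {μ : Measure X} {Γ : Type*} [Group Γ]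
  (S : TuringSystem X μ Γ)

def pieceOf (x : X) : Fin S.n := (S.exists_piece x).choose

lemma map_apply (x : X) : S.map x = S.ρ (S.elt (S.pieceOf x)) x := rfl

lemma pieceOf_eq_iff {x : X} {i : Fin S.n} : S.pieceOf x = i ↔ x ∈ S.piece i := by
  have hx : x ∈ S.piece (S.pieceOf x) := (S.exists_piece x).choose_spec
  refine ⟨fun h => h ▸ hx, fun hi => ?_⟩
  by_contra hne
  exact disjoint_left.1 (S.piece_disj _ _ hne) hx hi

lemma measurable_pieceOf : Measurable S.pieceOf :=
  measurable_to_countable' fun i => by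
    rw [show S.pieceOf ⁻¹' {i} = S.piece i from ext fun x => S.pieceOf_eq_iff]
    exact S.piece_meas i

lemma measurable_map : Measurable S.map :=
  (measurable_from_prod_countable_left (f := fun p : X × Fin S.n => S.ρ (S.elt p.2) p.1)
    fun i => (S.ρ (S.elt i)).measurable).comp (measurable_id.prodMk S.measurable_pieceOf)

lemma measurableSet_of_pieces {T : Set X} (hT : ∃ s : Finset (Fin S.n), T = ⋃ i ∈ s, S.piece i) :
    MeasurableSet T := by
  obtain ⟨s, rfl⟩ := hT
  exact .biUnion s.countable_toSet fun i _ => S.piece_meas i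

lemma piece_pieceOf_subset {T : Set X}
    (hT : ∃ s : Finset (Fin S.n), T = ⋃ i ∈ s, S.piece i) {x : X} (hx : x ∈ T) :
    S.piece (S.pieceOf x) ⊆ T := by
  obtain ⟨s, rfl⟩ := hT
  obtain ⟨i, hi, hxi⟩ := mem_iUnion₂.1 hx
  rw [S.pieceOf_eq_iff.2 hxi]
  exact subset_biUnion_of_mem (u := S.piece) hi

lemma isFixedPt_map {x : X} (hx : x ∈ S.A) : IsFixedPt S.map x := by
  have h1 : S.elt (S.pieceOf x) = 1 :=
    S.elt_one _ ((S.piece_pieceOf_subset S.A_pieces hx).trans subset_union_left)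
  rw [IsFixedPt, map_apply, h1, S.ρ_one]
  rfl

lemma limitPt_eq_of_isFixedPt {x : X} {k : ℕ} (hk : IsFixedPt S.map (S.map^[k] x)) :
    S.limitPt x = S.map^[k] x := by
  have hH : S.Halts x := ⟨k, hk⟩
  rw [limitPt, dif_pos hH]
  exact iterate_eq_of_isFixedPt hH.choose_spec hk

lemma halts_and_limitPt_mem_A_iff {x : X} :
    S.Halts x ∧ S.limitPt x ∈ S.A ↔ ∃ k, S.map^[k] x ∈ S.A := by
  constructor
  · rintro ⟨hH, hA⟩
    exact ⟨hH.choose, S.limitPt_eq_of_isFixedPt hH.choose_spec ▸ hA⟩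
  · rintro ⟨k, hk⟩
    have hfix := S.isFixedPt_map hk
    exact ⟨⟨k, hfix⟩, (S.limitPt_eq_of_isFixedPt hfix).symm ▸ hk⟩

def firstArrival (k : ℕ) : Set X := {x | S.map^[k] x ∈ S.A ∧ ∀ j < k, S.map^[j] x ∉ S.A}

lemma mem_iUnion_firstArrival {x : X} :
    x ∈ ⋃ k, S.firstArrival k ↔ ∃ k, S.map^[k] x ∈ S.A := by
  refine ⟨fun hx => ?_, fun hx => mem_iUnion.2 ⟨Nat.find hx, Nat.find_spec hx,
    fun j hj => Nat.find_min hx hj⟩⟩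
  obtain ⟨k, hk, -⟩ := mem_iUnion.1 hx
  exact ⟨k, hk⟩

lemma eq_of_mem_firstArrival {x : X} {k m : ℕ} (hk : x ∈ S.firstArrival k)
    (hm : x ∈ S.firstArrival m) : k = m := by
  rcases lt_trichotomy k m with h | h | h
  · exact absurd hk.1 (hm.2 k h)
  · exact h
  · exact absurd hm.1 (hk.2 m h)

lemma measurableSet_firstArrival (k : ℕ) : MeasurableSet (S.firstArrival k) := by
  have hA : ∀ j, MeasurableSet (S.map^[j] ⁻¹' S.A) := fun j =>
    S.measurable_map.iterate j (S.measurableSet_of_pieces S.A_pieces)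
  simp only [firstArrival, ofPred_and, ofPred_forall]
  exact (hA k).inter (.iInter fun j => .iInter fun _ => (hA j).compl)

lemma measurableSet_range_map : MeasurableSet (range S.map) := by
  have h : range S.map = ⋃ i, S.ρ (S.elt i) '' S.piece i := by
    ext y
    simp only [mem_range, mem_iUnion, mem_image]
    constructor
    · rintro ⟨x, rfl⟩
      exact ⟨S.pieceOf x, x, S.pieceOf_eq_iff.1 rfl, rfl⟩
    · rintro ⟨i, x, hi, rfl⟩
      exact ⟨x, by rw [map_apply, S.pieceOf_eq_iff.2 hi]⟩
  rw [h]
  exact .iUnion fun i => (S.ρ (S.elt i)).measurableSet_image.2 (S.piece_meas i)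

lemma F1_eq_firstArrival : S.F1 = (S.I ∩ ⋃ k, S.firstArrival k) \ range S.map := by
  ext x
  simp only [F1, mem_ofPred_eq, mem_sdiff, mem_inter_iff, mem_iUnion_firstArrival,
    ← halts_and_limitPt_mem_A_iff, mem_range, not_exists, and_assoc]

lemma measurableSet_F1 : MeasurableSet S.F1 := by
  rw [F1_eq_firstArrival]
  exact ((S.measurableSet_of_pieces S.I_pieces).inter
    (.iUnion S.measurableSet_firstArrival)).diff S.measurableSet_range_map

def itinerary (k : ℕ) (x : X) : Fin k → Fin S.n := fun j => S.pieceOf (S.map^[j] x)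

lemma measurable_itinerary (k : ℕ) : Measurable (S.itinerary k) :=
  measurable_pi_lambda _ fun j => S.measurable_pieceOf.comp (S.measurable_map.iterate j)

def wordElt {k : ℕ} (w : Fin k → Fin S.n) : Γ := (List.ofFn fun j => S.elt (w j)).prod

lemma iterate_map_eq (k : ℕ) (x : X) : S.map^[k] x = S.ρ (S.wordElt (S.itinerary k x)) x := by
  induction k generalizing x with
  | zero =>
    simp only [wordElt, List.ofFn_zero, List.prod_nil, S.ρ_one]
    rfl
  | succ k ih =>
    rw [iterate_succ_apply, ih]
    simp only [wordElt, List.ofFn_succ, List.prod_cons, S.ρ_mul]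
    rfl

def block (p : Σ k, Fin k → Fin S.n) : Set X := S.firstArrival p.1 ∩ S.itinerary p.1 ⁻¹' {p.2}

lemma measurableSet_block (p : Σ k, Fin k → Fin S.n) : MeasurableSet (S.block p) :=
  (S.measurableSet_firstArrival p.1).inter (S.measurable_itinerary p.1 (measurableSet_singleton _))

lemma pairwise_disjoint_block : Pairwise (Disjoint on S.block) := by
  rintro ⟨k, w⟩ ⟨m, v⟩ hne
  refine disjoint_left.2 fun x ⟨hk, hw⟩ ⟨hm, hv⟩ => hne ?_
  obtain rfl : k = m := S.eq_of_mem_firstArrival hk hm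
  obtain rfl : w = v := (mem_singleton_iff.1 hw).symm.trans hv
  rfl

lemma F1_subset_iUnion_block : S.F1 ⊆ ⋃ p, S.block p := by
  intro x hx
  obtain ⟨k, hk⟩ := mem_iUnion.1 (S.F1_eq_firstArrival ▸ hx).1.2
  exact mem_iUnion.2 ⟨⟨k, S.itinerary k x⟩, hk, rfl⟩

lemma eqOn_limitPt_block (p : Σ k, Fin k → Fin S.n) :
    EqOn S.limitPt (S.ρ (S.wordElt p.2)) (S.block p) := by
  rintro x ⟨hk, hw⟩
  rw [S.limitPt_eq_of_isFixedPt (S.isFixedPt_map hk.1), iterate_map_eq, mem_singleton_iff.1 hw]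

lemma measure_limitPt_image_le {s : Set X} (hs : MeasurableSet s) (hsF : s ⊆ S.F1) :
    μ (S.limitPt '' s) ≤ μ s :=
  measure_image_le_of_eqOn_piecewise (fun _ => S.ρ_pres _) S.measurableSet_block
    S.pairwise_disjoint_block S.eqOn_limitPt_block hs (hsF.trans S.F1_subset_iUnion_block)

lemma measure_limitPt_image_eq {s : Set X} (hs : MeasurableSet s) (hsF : s ⊆ S.F1)
    (hinj : InjOn S.limitPt s) : μ (S.limitPt '' s) = μ s :=
  measure_image_eq_of_eqOn_piecewise (fun _ => S.ρ_pres _) S.measurableSet_block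
    S.pairwise_disjoint_block S.eqOn_limitPt_block hs (hsF.trans S.F1_subset_iUnion_block) hinj

end TuringSystem

theorem fundamental_values_eq_general {X : Type*} [MeasurableSpace X] {μ : Measure X}
    {Γ : Type*} [Group Γ] (S : TuringSystem X μ Γ)
    (h : S.DisjointAcceptingChains) :
    S.Omega1 = S.Omega2 := by
  obtain ⟨Z, hZ, hinj⟩ := h
  set s := S.F1 \ toMeasurable μ Z
  have hs : MeasurableSet s := S.measurableSet_F1.diff (measurableSet_toMeasurable μ Z)
  refine le_antisymm ?_ (S.measure_limitPt_image_le S.measurableSet_F1 subset_rfl)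
  calc S.Omega1 = μ s := (measure_sdiff_null (by rwa [measure_toMeasurable])).symm
    _ = μ (S.limitPt '' s) :=
        (S.measure_limitPt_image_eq hs sdiff_subset
          (hinj.mono (sdiff_subset_sdiff_right (subset_toMeasurable μ Z)))).symm
    _ ≤ S.Omega2 := measure_mono (image_mono sdiff_subset)

/-- a Turing dynamical system with disjoint accepting chains has equal
first and second fundamental values. -/
theorem fundamental_values_eq {X : Type*} [MeasurableSpace X] {μ : Measure X}
    [IsProbabilityMeasure μ] {Γ : Type*} [Group Γ] (S : TuringSystem X μ Γ)
    (h : S.DisjointAcceptingChains) :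
    S.Omega1 = S.Omega2 :=
  fundamental_values_eq_general S h
end
end

section
/- Let V be a finite set and t : V → V a map such that every point is eventually fixed (for each v there is n with t^{n+1}(v) = t^n(v)); let F be the set of fixed points of t, and let I ⊆ V satisfy I ∩ F = ∅ and I ∩ t(V) = ∅. Define the linear map M : ℂ^V → ℂ^V by M(e_v) = e_{t(v)} + e_v for v ∉ I ∪ F and M(e_v) = e_{t(v)} for v ∈ I ∪ F. For u ∈ I, let k(u) be minimal with t^{k(u)+1}(u) = t^{k(u)}(u), and set ξ(u) := Σ_{i=0}^{k(u)} (−1)^i e_{t^i(u)}. Then the vectors {ξ(u) : u ∈ I} are linearly independent and their linear span equals ker M; in particular dim_ℂ ker M = |I|. -/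
/-!
Along the chain u, t u, …, t^k u of `u ∈ I` (k the stopping time), M sends e_{t^i u} to
e_{t^{i+1} u} + e_{t^i u} except at the two ends, where only e_{t^{i+1} u} survives (the start
lies in I, the end is fixed); hence the alternating sum ξ(u) telescopes to M ξ(u) = 0.
Conversely, the v-coordinate of M y is y(v) (or nothing, for v ∈ I ∪ F) plus the values of y at
the preimages of v, all of which have strictly larger stopping time; so a kernel vector vanishing
on I vanishes everywhere, by induction downwards on the stopping time. As ξ(u) restricted to I
is the indicator of u, the ξ(u) therefore form a basis of ker M.
-/

noncomputable section

attribute [local instance] Classical.propDecidable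

namespace ChainKernel

variable {V : Type*} [Fintype V] [DecidableEq V]

/-- k(u): the minimal n with t^[n+1] u = t^[n] u -/
def stopTime (t : V → V) (u : V) : ℕ := sInf {n : ℕ | t^[n + 1] u = t^[n] u}

/-- ξ(u) = Σ_{i=0}^{k(u)} (−1)^i e_{t^i(u)} -/
def xiVec (t : V → V) (u : V) : V → ℂ :=
  ∑ i ∈ Finset.range (stopTime t u + 1), ((-1 : ℂ)) ^ i • (Pi.single (t^[i] u) (1 : ℂ) : V → ℂ)

/-- the matrix of the linear map M: M(e_v) = e_{t v} + e_v for v ∉ I ∪ F and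
M(e_v) = e_{t v} for v ∈ I ∪ F (F the fixed-point set of t) -/
def opM (t : V → V) (I : Set V) : Matrix V V ℂ :=
  Matrix.of fun u v =>
    (if u = t v then 1 else 0) +
      (if v ∈ I ∪ {w : V | t w = w} then 0 else if u = v then 1 else 0)

end ChainKernel

theorem alternating_sum_eq_zero_of_chain {R X : Type*} [CommRing R] [AddCommGroup X] [Module R X]
    {a b : ℕ → X} {k : ℕ} (hk : 0 < k) (h0 : b 0 = a 1)
    (hmid : ∀ i, 0 < i → i < k → b i = a (i + 1) + a i) (hlast : b k = a k) :
    ∑ i ∈ Finset.range (k + 1), (-1 : R) ^ i • b i = 0 := by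
  have partial_sum :
      ∀ m < k, ∑ i ∈ Finset.range (m + 1), (-1 : R) ^ i • b i =
        (-1 : R) ^ m • a (m + 1) := by
    intro m hm
    induction m with
    | zero => simp [h0]
    | succ m ih =>
      rw [Finset.sum_range_succ, ih (by omega), hmid (m + 1) (by omega) hm, pow_succ]
      module
  obtain ⟨m, rfl⟩ : ∃ m, k = m + 1 := ⟨k - 1, by omega⟩
  rw [Finset.sum_range_succ, partial_sum m (by omega), hlast, pow_succ]
  module

theorem linearIndependent_and_span_eq_ker_of_dual {R V W ι : Type*} [Ring R] [AddCommGroup W]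
    [Module R W] [Fintype ι] (f : (V → R) →ₗ[R] W) (p : ι → V) (ξ : ι → V → R)
    (hξ_self : ∀ i, ξ i (p i) = 1) (hξ_ne : ∀ i j, i ≠ j → ξ i (p j) = 0)
    (hξ_ker : ∀ i, f (ξ i) = 0)
    (hker : ∀ y ∈ LinearMap.ker f, (∀ j, y (p j) = 0) → y = 0) :
    LinearIndependent R ξ ∧ Submodule.span R (Set.range ξ) = LinearMap.ker f := by
  have eval_sum : ∀ (g : ι → R) (j : ι), (∑ i, g i • ξ i) (p j) = g j := by
    intro g j
    rw [Finset.sum_apply, Finset.sum_eq_single j (fun i _ hij => by simp [hξ_ne i j hij])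
      (fun h => absurd (Finset.mem_univ j) h)]
    simp [hξ_self]
  refine ⟨Fintype.linearIndependent_iff.mpr fun g hg j => ?_, le_antisymm ?_ fun x hx => ?_⟩
  · simpa [eval_sum] using congrFun hg (p j)
  · exact Submodule.span_le.mpr (Set.range_subset_iff.mpr hξ_ker)
  · have hx_eq : x = ∑ i, x (p i) • ξ i := by
      refine sub_eq_zero.mp (hker _ ?_ fun j => by simp [eval_sum])
      simp [LinearMap.mem_ker.mp hx, map_sum, hξ_ker]
    rw [hx_eq]
    exact Submodule.sum_mem _ fun i _ => Submodule.smul_mem _ _ (Submodule.subset_span ⟨i, rfl⟩)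

namespace ChainKernel

variable {V : Type*} {t : V → V}

theorem apply_iterate_stopTime (hfix : ∀ v : V, ∃ n : ℕ, t^[n + 1] v = t^[n] v) (u : V) :
    t (t^[stopTime t u] u) = t^[stopTime t u] u := by
  rw [← Function.iterate_succ_apply' t]
  exact Nat.sInf_mem (hfix u)

theorem apply_iterate_ne_of_lt_stopTime {u : V} {n : ℕ} (hn : n < stopTime t u) :
    t (t^[n] u) ≠ t^[n] u := by
  rw [← Function.iterate_succ_apply' t]
  exact Nat.notMem_of_lt_sInf hn

theorem stopTime_pos (hfix : ∀ v : V, ∃ n : ℕ, t^[n + 1] v = t^[n] v) {u : V} (hu : t u ≠ u) :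
    0 < stopTime t u :=
  Nat.pos_of_ne_zero fun h => hu (by simpa [h] using apply_iterate_stopTime hfix u)

theorem stopTime_apply_lt (hfix : ∀ v : V, ∃ n : ℕ, t^[n + 1] v = t^[n] v) {u : V}
    (hu : t u ≠ u) :
    stopTime t (t u) < stopTime t u := by
  have hpos := stopTime_pos hfix hu
  have hmem : stopTime t u - 1 ∈ {n : ℕ | t^[n + 1] (t u) = t^[n] (t u)} := by
    simp only [Set.mem_ofPred_eq, ← Function.iterate_succ_apply, Nat.succ_eq_add_one,
      Nat.sub_add_cancel hpos]
    exact Nat.sInf_mem (hfix u)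
  exact (Nat.sInf_le hmem).trans_lt (by omega)

variable [DecidableEq V]

theorem xiVec_apply_of_mem {I : Set V} (hIt : ∀ v ∈ I, v ∉ Set.range t) (u : V) {u' : V}
    (hu' : u' ∈ I) : xiVec t u u' = if u' = u then 1 else 0 := by
  rw [xiVec, Finset.sum_apply, Finset.sum_eq_single 0 _ (by simp)]
  · simp [Pi.single_apply]
  · intro i _ hi
    obtain ⟨j, rfl⟩ : ∃ j, i = j + 1 := ⟨i - 1, by omega⟩
    have hne : u' ≠ t^[j] (t u) := fun h =>
      hIt u' hu' ⟨t^[j] u, by rw [h, Function.Commute.self_iterate t j]⟩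
    simp [hne]

variable [Fintype V]

variable (t) in
theorem opM_mulVec_apply (I : Set V) (y : V → ℂ) (v : V) :
    (opM t I).mulVec y v =
      (∑ w ∈ Finset.univ.filter (fun w => t w = v), y w) +
        (if v ∈ I ∪ {w : V | t w = w} then 0 else y v) := by
  simp only [Matrix.mulVec, dotProduct, opM, Matrix.of_apply, add_mul, Finset.sum_add_distrib,
    Finset.sum_filter, eq_comm (a := v), ite_mul, one_mul, zero_mul]
  congr 1
  rw [Finset.sum_eq_single v (fun w _ hwv => by simp [hwv]) (by simp)]
  simp

variable (t) in
theorem opM_mulVec_single (I : Set V) (w : V) :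
    (opM t I).mulVec (Pi.single w 1) =
      Pi.single (t w) 1 + (if w ∈ I ∪ {x : V | t x = x} then 0 else Pi.single w 1) := by
  ext v
  rw [Matrix.mulVec_single_one]
  by_cases h : w ∈ I ∪ {x : V | t x = x} <;>
    simp only [Matrix.col_apply, opM, Matrix.of_apply, h, if_true, if_false, Pi.add_apply,
      Pi.single_apply, Pi.zero_apply, add_zero]

theorem opM_mulVec_xiVec (hfix : ∀ v : V, ∃ n : ℕ, t^[n + 1] v = t^[n] v) {I : Set V}
    (hIF : ∀ v ∈ I, t v ≠ v) (hIt : ∀ v ∈ I, v ∉ Set.range t) {u : V} (hu : u ∈ I) :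
    (opM t I).mulVec (xiVec t u) = 0 := by
  rw [xiVec, Matrix.mulVec_sum]
  simp only [Matrix.mulVec_smul]
  refine alternating_sum_eq_zero_of_chain (a := fun i => Pi.single (t^[i] u) 1)
    (stopTime_pos hfix (hIF u hu)) ?_ ?_ ?_
  · simp only [opM_mulVec_single]
    simp [hu]
  · intro i hi hik
    have hnot : t^[i] u ∉ I ∪ {x : V | t x = x} := by
      rintro (hI | hF)
      · refine hIt _ hI ⟨t^[i - 1] u, ?_⟩
        rw [← Function.iterate_succ_apply' t, Nat.succ_eq_add_one, Nat.sub_add_cancel hi]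
      · exact apply_iterate_ne_of_lt_stopTime hik hF
    simp only [opM_mulVec_single, hnot, if_false, Function.iterate_succ_apply']
  · have hfixed := apply_iterate_stopTime hfix u
    simp only [opM_mulVec_single, hfixed]
    simp [hfixed]

theorem eq_zero_of_mulVec_eq_zero (hfix : ∀ v : V, ∃ n : ℕ, t^[n + 1] v = t^[n] v) (I : Set V)
    {y : V → ℂ} (hy : (opM t I).mulVec y = 0) (hyI : ∀ v ∈ I, y v = 0) : y = 0 := by
  -- preimages of `v` other than `v` itself have a larger stopping time
  have hwf : WellFounded fun w v : V => stopTime t v < stopTime t w :=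
    haveI : IsTrans V fun w v : V => stopTime t v < stopTime t w :=
      ⟨fun _ _ _ h₁ h₂ => h₂.trans h₁⟩
    haveI : Std.Irrefl fun w v : V => stopTime t v < stopTime t w := ⟨fun _ => lt_irrefl _⟩
    Finite.wellFounded_of_trans_of_irrefl _
  funext v
  induction v using hwf.induction with
  | _ v ih =>
  by_cases hvI : v ∈ I
  · exact hyI v hvI
  have hpre : ∀ w, t w = v → w ≠ v → y w = 0 := fun w hw hwv =>
    ih w (hw ▸ stopTime_apply_lt hfix fun h => hwv (h.symm.trans hw))
  have hv := congrFun hy v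
  rw [opM_mulVec_apply] at hv
  by_cases hvF : t v = v
  · have hmem : v ∈ Finset.univ.filter (fun w => t w = v) := by simpa using hvF
    rw [← Finset.sum_erase_add _ _ hmem, Finset.sum_eq_zero fun w hw => hpre w
      (Finset.mem_filter.mp (Finset.mem_of_mem_erase hw)).2 (Finset.ne_of_mem_erase hw)] at hv
    simpa [hvF] using hv
  · rw [Finset.sum_eq_zero fun w hw => hpre w (Finset.mem_filter.mp hw).2
      (by rintro rfl; exact hvF (Finset.mem_filter.mp hw).2)] at hv
    simpa [hvI, hvF] using hv

end ChainKernel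

open ChainKernel in
/-- for an eventually-fixed map t on a finite set V, and I avoiding both
the fixed points and the image of t, the vectors ξ(u), u ∈ I, are linearly independent
and span the kernel of M; in particular dim ker M = |I|. -/
theorem kernel_of_chain_operator {V : Type*} [Fintype V] [DecidableEq V]
    (t : V → V) (hfix : ∀ v : V, ∃ n : ℕ, t^[n + 1] v = t^[n] v)
    (I : Set V) (hIF : ∀ v ∈ I, t v ≠ v) (hIt : ∀ v ∈ I, v ∉ Set.range t) :
    LinearIndependent ℂ (fun u : I => xiVec t (u : V)) ∧
      Submodule.span ℂ (Set.range fun u : I => xiVec t (u : V))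
        = LinearMap.ker (opM t I).mulVecLin ∧
      Module.finrank ℂ (LinearMap.ker (opM t I).mulVecLin) = Nat.card I := by
  obtain ⟨hind, hspan⟩ := linearIndependent_and_span_eq_ker_of_dual (opM t I).mulVecLin
    (fun u : I => (u : V)) (fun u : I => xiVec t (u : V))
    (fun u => by simp [xiVec_apply_of_mem hIt _ u.2])
    (fun u u' hne => by simp [xiVec_apply_of_mem hIt _ u'.2, Subtype.val_injective.ne hne.symm])
    (fun u => opM_mulVec_xiVec hfix hIF hIt u.2)
    (fun y hy hyI => eq_zero_of_mulVec_eq_zero hfix I hy fun v hv => hyI ⟨v, hv⟩)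
  refine ⟨hind, hspan, ?_⟩
  rw [← hspan, finrank_span_eq_card hind, Nat.card_eq_fintype_card]
end
end

section
/- For countable discrete groups G and H: (i) the set 𝒞(G) is closed under addition, and (ii) if a ∈ 𝒞(G) and b ∈ 𝒞(H), then a + b ∈ 𝒞(G × H). -/
/-!
If `a = dim ker T` and `b = dim ker S`, then `a + b = dim ker (T ⊕ S)`: the trace sequence of the
block sum is the sum of the two trace sequences, except that it is normalized by the larger
constant `c(T ⊕ S)`. The limit does not depend on the constant `c` as long as `c ≥ c(T)`:
with `p = c(T) / c`, one has `1 - x / c = p (1 - x / c(T)) + (1 - p)`, so by the binomial theorem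
the new sequence is the binomial (Euler) mean of the old one, and such means preserve limits.
For `G × H`, the inclusions of `G` and `H` induce trace-, adjoint- and `ν`-preserving maps of
matrices over the group rings, so `𝒞(G)` and `𝒞(H)` lie in `𝒞(G × H)`.
-/

open scoped BigOperators

noncomputable section

namespace L2B

variable {G : Type*} [Group G]

/-- trace on matrices over ℚG : sum of coefficients of identity on the diagonal -/
def mTrace {k : ℕ} (T : Matrix (Fin k) (Fin k) (MonoidAlgebra ℚ G)) : ℚ :=
  ∑ i, (T i i).coeff (1 : G)

/-- adjoint of a matrix over ℚG -/
def mAdj {k : ℕ} (T : Matrix (Fin k) (Fin k) (MonoidAlgebra ℚ G)) :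
    Matrix (Fin k) (Fin k) (MonoidAlgebra ℚ G) :=
  fun i j => MonoidAlgebra.ofCoeff (Finsupp.mapDomain (fun g : G => g⁻¹) (T j i).coeff)

/-- ν(T): sum of absolute values of all rational coefficients -/
def mNu {k : ℕ} (T : Matrix (Fin k) (Fin k) (MonoidAlgebra ℚ G)) : ℚ :=
  ∑ i, ∑ j, ∑ g ∈ (T i j).coeff.support, |(T i j).coeff g|

def mC {k : ℕ} (T : Matrix (Fin k) (Fin k) (MonoidAlgebra ℚ G)) : ℚ := mNu T ^ 2 + 1

/-- dim_vN ker T = r -/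
def HasDimKer {k : ℕ} (T : Matrix (Fin k) (Fin k) (MonoidAlgebra ℚ G)) (r : ℝ) : Prop :=
  Filter.Tendsto
    (fun n : ℕ => ((mTrace ((1 - (mC T)⁻¹ • (mAdj T * T)) ^ n) : ℚ) : ℝ))
    Filter.atTop (nhds r)

/-- the set of l²-Betti numbers arising from G -/
def betti (G : Type*) [Group G] : Set ℝ :=
  {r | ∃ (k : ℕ) (T : Matrix (Fin k) (Fin k) (MonoidAlgebra ℚ G)), HasDimKer T r}

end L2B

open Filter Finset Matrix Topology

theorem Filter.Tendsto.weighted_sum_range {t : ℕ → ℝ} {a : ℝ} (ht : Tendsto t atTop (𝓝 a))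
    {w : ℕ → ℕ → ℝ} (hw₀ : ∀ n k, 0 ≤ w n k) (hw₁ : ∀ n, ∑ k ∈ range (n + 1), w n k = 1)
    (hw : ∀ k, Tendsto (w · k) atTop (𝓝 0)) :
    Tendsto (fun n => ∑ k ∈ range (n + 1), w n k * t k) atTop (𝓝 a) := by
  have hcenter : ∀ n, ∑ k ∈ range (n + 1), w n k * t k
      = a + ∑ k ∈ range (n + 1), w n k * (t k - a) := fun n => by
    simp only [mul_sub, sum_sub_distrib, ← sum_mul, hw₁, one_mul, add_sub_cancel]
  suffices h : Tendsto (fun n => ∑ k ∈ range (n + 1), w n k * (t k - a)) atTop (𝓝 0) by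
    simpa only [hcenter, add_zero] using tendsto_const_nhds (x := a) |>.add h
  refine Metric.tendsto_atTop.2 fun ε hε => ?_
  have hs : Tendsto (fun k => t k - a) atTop (𝓝 0) := by simpa using ht.sub_const a
  obtain ⟨N, hN⟩ := Metric.tendsto_atTop.1 hs (ε / 2) (half_pos hε)
  have hhead : Tendsto (fun n => ∑ k ∈ range N, w n k * (t k - a)) atTop (𝓝 0) := by
    simpa using tendsto_finsetSum (range N) fun k _ => (hw k).mul_const (t k - a)
  obtain ⟨N', hN'⟩ := Metric.tendsto_atTop.1 hhead (ε / 2) (half_pos hε)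
  refine ⟨max N N', fun n hn => ?_⟩
  have hhead_lt : |∑ k ∈ range N, w n k * (t k - a)| < ε / 2 := by
    simpa using hN' n (le_of_max_le_right hn)
  have htail_le : |∑ k ∈ Ico N (n + 1), w n k * (t k - a)| ≤ ε / 2 :=
    calc |∑ k ∈ Ico N (n + 1), w n k * (t k - a)|
        ≤ ∑ k ∈ Ico N (n + 1), w n k * (ε / 2) := by
          refine (abs_sum_le_sum_abs _ _).trans (sum_le_sum fun k hk => ?_)
          rw [abs_mul, abs_of_nonneg (hw₀ n k)]
          have hk' : |t k - a| < ε / 2 := by simpa using hN k (mem_Ico.1 hk).1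
          exact mul_le_mul_of_nonneg_left hk'.le (hw₀ n k)
      _ ≤ ∑ k ∈ range (n + 1), w n k * (ε / 2) :=
          sum_le_sum_of_subset_of_nonneg (fun k hk => mem_range.2 (mem_Ico.1 hk).2)
            fun k _ _ => mul_nonneg (hw₀ n k) (half_pos hε).le
      _ = ε / 2 := by rw [← sum_mul, hw₁, one_mul]
  rw [Real.dist_eq, sub_zero,
    ← sum_range_add_sum_Ico _ (show N ≤ n + 1 by have := le_of_max_le_left hn; omega)]
  linarith [abs_add_le (∑ k ∈ range N, w n k * (t k - a)) (∑ k ∈ Ico N (n + 1), w n k * (t k - a))]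

theorem Filter.Tendsto.binomial_mean {t : ℕ → ℝ} {a : ℝ} (ht : Tendsto t atTop (𝓝 a))
    {p : ℝ} (hp₀ : 0 < p) (hp₁ : p ≤ 1) :
    Tendsto (fun n => ∑ k ∈ range (n + 1), n.choose k * p ^ k * (1 - p) ^ (n - k) * t k)
      atTop (𝓝 a) := by
  have hq₀ : 0 ≤ 1 - p := by linarith
  refine ht.weighted_sum_range (fun n k => by positivity) (fun n => ?_) (fun k => ?_)
  · have hbinom := (add_pow p (1 - p) n).symm
    rw [add_sub_cancel, one_pow] at hbinom
    exact (sum_congr rfl fun k _ => by ring).trans hbinom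
  · rw [← tendsto_add_atTop_iff_nat k]
    have hq : ‖1 - p‖ < 1 := by rw [Real.norm_eq_abs, abs_lt]; constructor <;> linarith
    convert ((summable_choose_mul_geometric_of_norm_lt_one k hq).tendsto_atTop_zero).const_mul
      (p ^ k) using 2 with n
    · rw [Nat.add_sub_cancel]; ring
    · simp

theorem tendsto_map_one_sub_smul_pow_of_le {R : Type*} [Ring R] [Algebra ℚ R] (f : R →ₗ[ℚ] ℚ)
    (x : R) {c₁ c₂ : ℚ} (hc₁ : 0 < c₁) (hc : c₁ ≤ c₂) {a : ℝ}
    (h : Tendsto (fun n : ℕ => (f ((1 - c₁⁻¹ • x) ^ n) : ℝ)) atTop (𝓝 a)) :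
    Tendsto (fun n : ℕ => (f ((1 - c₂⁻¹ • x) ^ n) : ℝ)) atTop (𝓝 a) := by
  have hc₂ : 0 < c₂ := hc₁.trans_le hc
  set p : ℚ := c₁ / c₂
  have hconvex : 1 - c₂⁻¹ • x = p • (1 - c₁⁻¹ • x) + (1 - p) • 1 := by
    rw [smul_sub, smul_smul, show p * c₁⁻¹ = c₂⁻¹ by simp only [p]; field_simp, sub_smul, one_smul]
    abel
  have hexpand : ∀ n, f ((1 - c₂⁻¹ • x) ^ n) = ∑ k ∈ range (n + 1),
      n.choose k * p ^ k * (1 - p) ^ (n - k) * f ((1 - c₁⁻¹ • x) ^ k) := fun n => by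
    rw [hconvex, (((Commute.one_right _).smul_right _).smul_left _).add_pow, map_sum]
    refine sum_congr rfl fun k _ => ?_
    rw [smul_pow, smul_pow, one_pow, smul_mul_smul_comm, mul_one, ← Nat.cast_comm,
      ← nsmul_eq_mul, map_nsmul, map_smul, nsmul_eq_mul, smul_eq_mul]
    ring
  refine (h.binomial_mean (p := (p : ℝ)) (by positivity)
    (by exact_mod_cast (div_le_one hc₂).2 hc)).congr fun n => ?_
  rw [hexpand]
  push_cast
  rfl

namespace L2B

variable {G : Type*} {ι κ : Type*}

/- `mTrace`, `mAdj` and `mNu` for an arbitrary finite index type, so that block sums can be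
formed over `Fin k ⊕ Fin m` before reindexing to `Fin (k + m)`. -/

def idTrace [One G] [Fintype ι] : Matrix ι ι (MonoidAlgebra ℚ G) →ₗ[ℚ] ℚ where
  toFun M := ∑ i, (M i i).coeff 1
  map_add' M N := by simp [sum_add_distrib]
  map_smul' q M := by simp [mul_sum]

def adjoint [Inv G] (M : Matrix ι ι (MonoidAlgebra ℚ G)) : Matrix ι ι (MonoidAlgebra ℚ G) :=
  fun i j => MonoidAlgebra.ofCoeff (Finsupp.mapDomain (fun g : G => g⁻¹) (M j i).coeff)

def l1Norm [Fintype ι] (M : Matrix ι ι (MonoidAlgebra ℚ G)) : ℚ :=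
  ∑ i, ∑ j, ∑ g ∈ (M i j).coeff.support, |(M i j).coeff g|

theorem l1Norm_nonneg [Fintype ι] (M : Matrix ι ι (MonoidAlgebra ℚ G)) : 0 ≤ l1Norm M :=
  sum_nonneg fun _ _ => sum_nonneg fun _ _ => sum_nonneg fun _ _ => abs_nonneg _

theorem mC_pos {k : ℕ} (T : Matrix (Fin k) (Fin k) (MonoidAlgebra ℚ G)) : 0 < mC T := by
  unfold mC
  positivity

theorem mC_le_mC {k m : ℕ} {T : Matrix (Fin k) (Fin k) (MonoidAlgebra ℚ G)}
    {S : Matrix (Fin m) (Fin m) (MonoidAlgebra ℚ G)} (h : mNu T ≤ mNu S) : mC T ≤ mC S := by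
  unfold mC
  gcongr
  exact l1Norm_nonneg T

theorem idTrace_fromBlocks [One G] [Fintype ι] [Fintype κ] (A : Matrix ι ι (MonoidAlgebra ℚ G))
    (B C) (D : Matrix κ κ (MonoidAlgebra ℚ G)) :
    idTrace (fromBlocks A B C D) = idTrace A + idTrace D :=
  Fintype.sum_sum_type _

theorem adjoint_fromBlocks_zero [Inv G] (A : Matrix ι ι (MonoidAlgebra ℚ G))
    (D : Matrix κ κ (MonoidAlgebra ℚ G)) :
    adjoint (fromBlocks A 0 0 D) = fromBlocks (adjoint A) 0 0 (adjoint D) := by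
  ext (i | i) (j | j) <;> simp [adjoint]

theorem l1Norm_fromBlocks_zero [Fintype ι] [Fintype κ] (A : Matrix ι ι (MonoidAlgebra ℚ G))
    (D : Matrix κ κ (MonoidAlgebra ℚ G)) :
    l1Norm (fromBlocks A 0 0 D) = l1Norm A + l1Norm D := by
  simp [l1Norm, Fintype.sum_sum_type]

theorem idTrace_reindex [One G] [Fintype ι] [Fintype κ] (e : ι ≃ κ)
    (M : Matrix ι ι (MonoidAlgebra ℚ G)) : idTrace (reindex e e M) = idTrace M :=
  e.symm.sum_comp fun i => (M i i).coeff 1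

theorem adjoint_reindex [Inv G] (e : ι ≃ κ) (M : Matrix ι ι (MonoidAlgebra ℚ G)) :
    adjoint (reindex e e M) = reindex e e (adjoint M) :=
  rfl

theorem l1Norm_reindex [Fintype ι] [Fintype κ] (e : ι ≃ κ) (M : Matrix ι ι (MonoidAlgebra ℚ G)) :
    l1Norm (reindex e e M) = l1Norm M :=
  Fintype.sum_equiv e.symm _ _ fun _ => Fintype.sum_equiv e.symm _ _ fun _ => rfl

section mapDomain

variable {H : Type*} [Monoid G] [Monoid H] {f : G →* H} [Fintype ι] [DecidableEq ι]

theorem idTrace_mapMatrix (hf : Function.Injective f) (M : Matrix ι ι (MonoidAlgebra ℚ G)) :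
    idTrace ((MonoidAlgebra.mapDomainAlgHom ℚ ℚ f).mapMatrix M) = idTrace M :=
  sum_congr rfl fun i _ => by
    change Finsupp.mapDomain f (M i i).coeff 1 = (M i i).coeff 1
    rw [← map_one f, Finsupp.mapDomain_apply hf]

theorem l1Norm_mapMatrix (hf : Function.Injective f) (M : Matrix ι ι (MonoidAlgebra ℚ G)) :
    l1Norm ((MonoidAlgebra.mapDomainAlgHom ℚ ℚ f).mapMatrix M) = l1Norm M := by
  classical
  refine sum_congr rfl fun i _ => sum_congr rfl fun j _ => ?_
  change ∑ h ∈ (Finsupp.mapDomain f (M i j).coeff).support, |Finsupp.mapDomain f (M i j).coeff h|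
    = _
  rw [Finsupp.mapDomain_support_of_injective hf, sum_image hf.injOn]
  simp only [Finsupp.mapDomain_apply hf]

end mapDomain

theorem adjoint_mapMatrix {H : Type*} [Group G] [Group H] {f : G →* H} [Fintype ι] [DecidableEq ι]
    (M : Matrix ι ι (MonoidAlgebra ℚ G)) :
    adjoint ((MonoidAlgebra.mapDomainAlgHom ℚ ℚ f).mapMatrix M)
      = (MonoidAlgebra.mapDomainAlgHom ℚ ℚ f).mapMatrix (adjoint M) := by
  ext i j : 2
  change Finsupp.mapDomain (fun h : H => h⁻¹) (Finsupp.mapDomain f (M j i).coeff)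
    = Finsupp.mapDomain f (Finsupp.mapDomain (fun g : G => g⁻¹) (M j i).coeff)
  rw [← Finsupp.mapDomain_comp, ← Finsupp.mapDomain_comp]
  congr 1
  exact funext fun g => (map_inv f g).symm

variable [Group G]

def dimKerApprox [Fintype ι] [DecidableEq ι] (c : ℚ) (M : Matrix ι ι (MonoidAlgebra ℚ G))
    (n : ℕ) : ℚ :=
  idTrace ((1 - c⁻¹ • (adjoint M * M)) ^ n)

theorem dimKerApprox_fromBlocks_zero [Fintype ι] [DecidableEq ι] [Fintype κ] [DecidableEq κ]
    (c : ℚ) (A : Matrix ι ι (MonoidAlgebra ℚ G)) (D : Matrix κ κ (MonoidAlgebra ℚ G)) (n : ℕ) :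
    dimKerApprox c (fromBlocks A 0 0 D) n = dimKerApprox c A n + dimKerApprox c D n := by
  have h : 1 - c⁻¹ • (adjoint (fromBlocks A 0 0 D) * fromBlocks A 0 0 D)
      = fromBlocks (1 - c⁻¹ • (adjoint A * A)) 0 0 (1 - c⁻¹ • (adjoint D * D)) := by
    rw [adjoint_fromBlocks_zero, fromBlocks_multiply]
    ext (i | i) (j | j) <;> simp [one_apply]
  rw [dimKerApprox, h, fromBlocks_diagonal_pow, idTrace_fromBlocks]
  rfl

theorem dimKerApprox_map {H : Type*} [Group H] [Fintype ι] [DecidableEq ι] [Fintype κ]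
    [DecidableEq κ] (Φ : Matrix ι ι (MonoidAlgebra ℚ G) →ₐ[ℚ] Matrix κ κ (MonoidAlgebra ℚ H))
    (hadj : ∀ M, adjoint (Φ M) = Φ (adjoint M)) (htr : ∀ M, idTrace (Φ M) = idTrace M)
    (c : ℚ) (M : Matrix ι ι (MonoidAlgebra ℚ G)) (n : ℕ) :
    dimKerApprox c (Φ M) n = dimKerApprox c M n := by
  rw [dimKerApprox, hadj, ← map_mul, ← map_smul, ← map_one Φ, ← map_sub, ← map_pow, htr]
  rfl

theorem dimKerApprox_reindex [Fintype ι] [DecidableEq ι] [Fintype κ] [DecidableEq κ] (e : ι ≃ κ)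
    (c : ℚ) (M : Matrix ι ι (MonoidAlgebra ℚ G)) (n : ℕ) :
    dimKerApprox c (reindex e e M) n = dimKerApprox c M n :=
  dimKerApprox_map (reindexAlgEquiv ℚ _ e).toAlgHom (adjoint_reindex e) (idTrace_reindex e) c M n

theorem dimKerApprox_mapMatrix {H : Type*} [Group H] {f : G →* H} (hf : Function.Injective f)
    [Fintype ι] [DecidableEq ι] (c : ℚ) (M : Matrix ι ι (MonoidAlgebra ℚ G)) (n : ℕ) :
    dimKerApprox c ((MonoidAlgebra.mapDomainAlgHom ℚ ℚ f).mapMatrix M) n = dimKerApprox c M n :=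
  dimKerApprox_map _ adjoint_mapMatrix (idTrace_mapMatrix hf) c M n


theorem hasDimKer_iff {k : ℕ} (T : Matrix (Fin k) (Fin k) (MonoidAlgebra ℚ G)) (r : ℝ) :
    HasDimKer T r ↔ Tendsto (fun n => (dimKerApprox (mC T) T n : ℝ)) atTop (𝓝 r) :=
  Iff.rfl

theorem tendsto_dimKerApprox_of_le [Fintype ι] [DecidableEq ι] {c₁ c₂ : ℚ} (hc₁ : 0 < c₁)
    (hc : c₁ ≤ c₂) {M : Matrix ι ι (MonoidAlgebra ℚ G)} {a : ℝ}
    (h : Tendsto (fun n => (dimKerApprox c₁ M n : ℝ)) atTop (𝓝 a)) :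
    Tendsto (fun n => (dimKerApprox c₂ M n : ℝ)) atTop (𝓝 a) :=
  tendsto_map_one_sub_smul_pow_of_le (R := Matrix ι ι (MonoidAlgebra ℚ G)) idTrace _ hc₁ hc h

theorem add_mem_betti {a b : ℝ} (ha : a ∈ betti G) (hb : b ∈ betti G) : a + b ∈ betti G := by
  obtain ⟨k, T, hT⟩ := ha
  obtain ⟨m, S, hS⟩ := hb
  let D := reindex finSumFinEquiv finSumFinEquiv (fromBlocks T 0 0 S)
  have hν : mNu D = mNu T + mNu S :=
    (l1Norm_reindex _ _).trans (l1Norm_fromBlocks_zero T S)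
  have hseq : ∀ c n, dimKerApprox c D n = dimKerApprox c T n + dimKerApprox c S n :=
    fun c n => (dimKerApprox_reindex _ c _ n).trans (dimKerApprox_fromBlocks_zero c T S n)
  have hTD := tendsto_dimKerApprox_of_le (mC_pos T)
    (mC_le_mC (hν ▸ le_add_of_nonneg_right (l1Norm_nonneg S))) ((hasDimKer_iff T a).1 hT)
  have hSD := tendsto_dimKerApprox_of_le (mC_pos S)
    (mC_le_mC (hν ▸ le_add_of_nonneg_left (l1Norm_nonneg T))) ((hasDimKer_iff S b).1 hS)
  refine ⟨k + m, D, (hasDimKer_iff D _).2 ((hTD.add hSD).congr fun n => ?_)⟩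
  rw [hseq, Rat.cast_add]

theorem betti_subset_of_injective {H : Type*} [Group H] {f : G →* H}
    (hf : Function.Injective f) : betti G ⊆ betti H := by
  rintro r ⟨k, T, hT⟩
  refine ⟨k, (MonoidAlgebra.mapDomainAlgHom ℚ ℚ f).mapMatrix T, ?_⟩
  have hc : mC ((MonoidAlgebra.mapDomainAlgHom ℚ ℚ f).mapMatrix T) = mC T :=
    congrArg (· ^ 2 + 1) (l1Norm_mapMatrix hf T)
  rw [hasDimKer_iff, hc]
  simpa only [dimKerApprox_mapMatrix hf] using (hasDimKer_iff T r).1 hT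

end L2B

open L2B in
theorem betti_add_closed_general (G : Type*) [Group G]
    (H : Type*) [Group H] :
    (∀ a b : ℝ, a ∈ betti G → b ∈ betti G → a + b ∈ betti G) ∧
      (∀ a b : ℝ, a ∈ betti G → b ∈ betti H → a + b ∈ betti (G × H)) :=
  ⟨fun _ _ => add_mem_betti, fun _ _ ha hb =>
    add_mem_betti (betti_subset_of_injective (f := MonoidHom.inl G H)
      (fun _ _ h => congrArg Prod.fst h) ha)
      (betti_subset_of_injective (f := MonoidHom.inr G H) (fun _ _ h => congrArg Prod.snd h) hb)⟩

open L2B in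
/-- (i) 𝒞(G) is closed under addition, and (ii) if a ∈ 𝒞(G), b ∈ 𝒞(H)
then a + b ∈ 𝒞(G × H). -/
theorem betti_add_closed (G : Type*) [Group G] [Countable G]
    (H : Type*) [Group H] [Countable H] :
    (∀ a b : ℝ, a ∈ betti G → b ∈ betti G → a + b ∈ betti G) ∧
      (∀ a b : ℝ, a ∈ betti G → b ∈ betti H → a + b ∈ betti (G × H)) :=
  betti_add_closed_general G H
end
end
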